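/- arXiv:2106.00176 — 2 statements merged into one kernel-verified Lean document; each statement's English description precedes it below -/
import Mathlib

section
/- Fix a real number R > 1 and an integer n ≥ 2. Define β : ℤ → ℝ by β(k) = R^{d(k)} with d(k) = min_{l ∈ ℤ} |k − 2nl|, and let S be the bounded invertible operator on ℓ²(ℤ, ℂ) with S e_k = (β(k+1)/β(k)) e_{k+1} for all k ∈ ℤ. Then the operator norm of S^n + S^{-n} satisfies ‖S^n + S^{-n}‖ ≥ 2 R^n. -/
/-- The Hilbert space `ℓ²(ℤ, ℂ)`. -/
noncomputable abbrev ellTwo : Type := lp (fun _ : ℤ => ℂ) 2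

/-- The standard orthonormal basis vectors `e_k` of `ℓ²(ℤ, ℂ)`. -/
noncomputable def stdBasis (k : ℤ) : ellTwo := lp.single 2 k (1 : ℂ)

/-- `d(k) = min_{l ∈ ℤ} |k - 2nl|`, the distance from `k` to the nearest
integer multiple of `2n`. -/
noncomputable def distMult (n : ℕ) (k : ℤ) : ℤ :=
  sInf (Set.range fun l : ℤ => |k - 2 * (n : ℤ) * l|)

/-- The weight sequence `β(k) = R^{d(k)}`. -/
noncomputable def weightβ (R : ℝ) (n : ℕ) (k : ℤ) : ℝ := R ^ distMult n k

/-!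
Starting from a multiple of `2n`, the weights `β` grow like `R^q` for `q` steps in either direction,
so `T = Sⁿ + S⁻ⁿ` maps `e_{2nl}` to `Rⁿ (e_{2nl-n} + e_{2nl+n})`. For `x = ∑_{l<N} e_{2nl}` and
`y = ∑_{l≤N} e_{2nl-n}` this gives `⟪y, T x⟫ = 2N Rⁿ`, while `‖x‖ ‖y‖ = √(N (N+1)) ≤ N + 1/2`;
letting `N → ∞` yields `‖T‖ ≥ 2Rⁿ`.
-/

open Finset

section Orthonormal

variable {𝕜 E ι : Type*} [RCLike 𝕜] [NormedAddCommGroup E] [InnerProductSpace 𝕜 E]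
  {v : ι → E}

theorem Orthonormal.inner_sum_left_eq_one (hv : Orthonormal 𝕜 v) {s : Finset ι} {i : ι}
    (hi : i ∈ s) : inner 𝕜 (∑ j ∈ s, v j) (v i) = 1 := by
  simpa using hv.inner_left_sum (fun _ => 1) hi

theorem Orthonormal.norm_sum_sq_eq_card (hv : Orthonormal 𝕜 v) (s : Finset ι) :
    ‖∑ i ∈ s, v i‖ ^ 2 = #s := by
  rw [← inner_self_eq_norm_sq (𝕜 := 𝕜), inner_sum,
    sum_congr rfl fun i hi => hv.inner_sum_left_eq_one hi]
  simp

end Orthonormal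

theorem two_mul_norm_le_opNorm_of_apply_eq_smul_add {𝕜 E : Type*} [RCLike 𝕜]
    [NormedAddCommGroup E] [InnerProductSpace 𝕜 E] (T : E →L[𝕜] E) {u v : ℕ → E}
    (hu : Orthonormal 𝕜 u) (hv : Orthonormal 𝕜 v) (c : 𝕜)
    (hT : ∀ j, T (u j) = c • (v j + v (j + 1))) : 2 * ‖c‖ ≤ ‖T‖ := by
  have bound : ∀ N : ℕ, 2 * N * ‖c‖ ≤ ‖T‖ * (N + 1 / 2) := by
    intro N
    set x := ∑ j ∈ range N, u j
    set y := ∑ j ∈ range (N + 1), v j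
    have hx : ‖x‖ ^ 2 = N := by simpa using hu.norm_sum_sq_eq_card (range N)
    have hy : ‖y‖ ^ 2 = N + 1 := by simpa using hv.norm_sum_sq_eq_card (range (N + 1))
    have hyv : ∀ j ≤ N, inner 𝕜 y (v j) = 1 := fun j hj =>
      hv.inner_sum_left_eq_one (mem_range.2 (Nat.lt_succ_of_le hj))
    have hinner : inner 𝕜 y (T x) = c * (2 * N) := by
      simp only [x, map_sum, hT, inner_sum, inner_smul_right, inner_add_right]
      rw [sum_congr rfl fun j hj => by
        rw [hyv j (mem_range.1 hj).le, hyv (j + 1) (mem_range.1 hj)]]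
      simp only [sum_const, card_range, nsmul_eq_mul]
      ring
    calc 2 * N * ‖c‖ = ‖inner 𝕜 y (T x)‖ := by
          simp only [hinner, norm_mul, RCLike.norm_ofNat, RCLike.norm_natCast]
          ring
      _ ≤ ‖y‖ * ‖T x‖ := norm_inner_le_norm _ _
      _ ≤ ‖y‖ * (‖T‖ * ‖x‖) := by gcongr; exact T.le_opNorm x
      _ ≤ ‖T‖ * ((‖x‖ ^ 2 + ‖y‖ ^ 2) / 2) := by
        nlinarith [sq_nonneg (‖x‖ - ‖y‖), norm_nonneg T]
      _ = ‖T‖ * (N + 1 / 2) := by rw [hx, hy]; ring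
  by_contra! h
  obtain ⟨N, hN⟩ := exists_nat_gt (‖T‖ / (2 * ‖c‖ - ‖T‖))
  rw [div_lt_iff₀ (by linarith)] at hN
  nlinarith [bound N]

section WeightedShift

variable {𝕜 M ι : Type*} [Field 𝕜] [AddCommGroup M] [Module 𝕜 M] [TopologicalSpace M]
  {S : M →L[𝕜] M}

theorem pow_apply_of_apply_eq_div_smul [AddMonoid ι] {w : ι → 𝕜} (hw : ∀ i, w i ≠ 0)
    {e : ι → M} {s : ι} (hS : ∀ i, S (e i) = (w (i + s) / w i) • e (i + s)) (m : ℕ) (i : ι) :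
    (S ^ m) (e i) = (w (i + m • s) / w i) • e (i + m • s) := by
  induction m with
  | zero => simp [hw]
  | succ m ih =>
    rw [pow_succ', mul_apply_eq_comp, ih, map_smul, hS, smul_smul, mul_comm,
      div_mul_div_cancel₀ (hw _), succ_nsmul, add_assoc]

theorem apply_eq_inv_smul_of_comp_eq_one {T : M →L[𝕜] M} (hTS : T ∘L S = 1) {x y : M} {c : 𝕜}
    (hc : c ≠ 0) (hxy : S x = c • y) : T y = c⁻¹ • x := by
  have : x = c • T y := by
    rw [← map_smul, ← hxy, ← ContinuousLinearMap.comp_apply, hTS, one_apply_eq_self]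
  rw [this, inv_smul_smul₀ hc]

end WeightedShift

theorem distMult_two_mul_add (n : ℕ) (l q : ℤ) (hq : |q| ≤ n) :
    distMult n (2 * n * l + q) = |q| := by
  refine le_antisymm (csInf_le ⟨0, ?_⟩ ⟨l, by simp⟩) (le_csInf (Set.range_nonempty _) ?_)
  · rintro _ ⟨m, rfl⟩
    positivity
  rintro _ ⟨m, rfl⟩
  rcases eq_or_ne l m with rfl | hlm
  · simp
  have h_one_le : 1 ≤ |l - m| := Int.one_le_abs (sub_ne_zero.2 hlm)
  have hshift : |2 * (n : ℤ) * (l - m)| = 2 * n * |l - m| := by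
    rw [abs_mul, abs_of_nonneg (by positivity)]
  have := abs_sub_abs_le_abs_sub (2 * (n : ℤ) * (l - m)) (-q)
  rw [abs_neg, sub_neg_eq_add, hshift] at this
  calc |q| ≤ 2 * n * |l - m| - |q| := by nlinarith
    _ ≤ |2 * n * (l - m) + q| := this
    _ = |2 * n * l + q - 2 * n * m| := by ring_nf

theorem weightβ_two_mul_add (R : ℝ) (n : ℕ) (l q : ℤ) (hq : |q| ≤ n) :
    weightβ R n (2 * n * l + q) = R ^ |q| := by
  rw [weightβ, distMult_two_mul_add n l q hq]

theorem orthonormal_stdBasis : Orthonormal ℂ stdBasis := by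
  classical
  convert (default : HilbertBasis ℤ ℂ ellTwo).orthonormal
  ext1 k
  rw [← HilbertBasis.repr_symm_single]
  rfl

section ShiftOnEllTwo

variable {R : ℝ} {n : ℕ} {S Sinv : ellTwo →L[ℂ] ellTwo}

theorem weightβ_ne_zero (hR : R ≠ 0) (n : ℕ) (k : ℤ) : weightβ R n k ≠ 0 :=
  zpow_ne_zero _ hR

theorem pow_apply_stdBasis (hR : R ≠ 0)
    (hS : ∀ k : ℤ, S (stdBasis k) =
      ((weightβ R n (k + 1) / weightβ R n k : ℝ) : ℂ) • stdBasis (k + 1))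
    (m : ℕ) (k : ℤ) :
    (S ^ m) (stdBasis k) =
      ((weightβ R n (k + m) / weightβ R n k : ℝ) : ℂ) • stdBasis (k + m) := by
  have hw (k : ℤ) : (weightβ R n k : ℂ) ≠ 0 := Complex.ofReal_ne_zero.2 (weightβ_ne_zero hR n k)
  simpa using pow_apply_of_apply_eq_div_smul hw (s := 1) (by simpa using hS) m k

theorem inv_pow_apply_stdBasis (hR : R ≠ 0)
    (hS : ∀ k : ℤ, S (stdBasis k) =
      ((weightβ R n (k + 1) / weightβ R n k : ℝ) : ℂ) • stdBasis (k + 1))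
    (hinv : Sinv ∘L S = 1) (m : ℕ) (k : ℤ) :
    (Sinv ^ m) (stdBasis k) =
      ((weightβ R n (k - m) / weightβ R n k : ℝ) : ℂ) • stdBasis (k - m) := by
  have hw (k : ℤ) : (weightβ R n k : ℂ) ≠ 0 := Complex.ofReal_ne_zero.2 (weightβ_ne_zero hR n k)
  have hSinv (k : ℤ) : Sinv (stdBasis k) =
      ((weightβ R n (k + -1) : ℂ) / weightβ R n k) • stdBasis (k + -1) := by
    have := hS (k + -1)
    rw [neg_add_cancel_right, Complex.ofReal_div] at this
    rw [apply_eq_inv_smul_of_comp_eq_one hinv (div_ne_zero (hw _) (hw _)) this, inv_div]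
  simpa [← sub_eq_add_neg] using pow_apply_of_apply_eq_div_smul hw hSinv m k

theorem pow_add_inv_pow_apply_stdBasis_two_mul (hR : R ≠ 0)
    (hS : ∀ k : ℤ, S (stdBasis k) =
      ((weightβ R n (k + 1) / weightβ R n k : ℝ) : ℂ) • stdBasis (k + 1))
    (hinv : Sinv ∘L S = 1) (l : ℤ) :
    (S ^ n + Sinv ^ n) (stdBasis (2 * n * l)) =
      ((R ^ n : ℝ) : ℂ) • (stdBasis (2 * n * l - n) + stdBasis (2 * n * l + n)) := by
  have h₀ : weightβ R n (2 * n * l) = 1 := by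
    simpa using weightβ_two_mul_add R n l 0 (by simp)
  have h_add : weightβ R n (2 * n * l + n) = R ^ n := by
    simpa using weightβ_two_mul_add R n l n (by simp)
  have h_sub : weightβ R n (2 * n * l - n) = R ^ n := by
    simpa [← sub_eq_add_neg] using weightβ_two_mul_add R n l (-n) (by simp)
  rw [add_apply, pow_apply_stdBasis hR hS, inv_pow_apply_stdBasis hR hS hinv, h₀, h_add, h_sub,
    div_one, smul_add, add_comm]

end ShiftOnEllTwo

theorem weighted_shift_norm_lower_bound_general (R : ℝ) (hR : 1 < R) (n : ℕ) (hn : 2 ≤ n)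
    (S Sinv : ellTwo →L[ℂ] ellTwo)
    (hinv₂ : Sinv ∘L S = 1)
    (hS : ∀ k : ℤ, S (stdBasis k) =
      ((weightβ R n (k + 1) / weightβ R n k : ℝ) : ℂ) • stdBasis (k + 1)) :
    2 * R ^ n ≤ ‖S ^ n + Sinv ^ n‖ := by
  have hR₀ : 0 < R := by linarith
  have hn₀ : n ≠ 0 := by omega
  have hT (j : ℕ) : (S ^ n + Sinv ^ n) (stdBasis (2 * n * j)) =
      ((R ^ n : ℝ) : ℂ) • (stdBasis (2 * n * j - n) + stdBasis (2 * n * ↑(j + 1) - n)) := by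
    rw [pow_add_inv_pow_apply_stdBasis_two_mul hR₀.ne' hS hinv₂]
    congr 3
    push_cast
    ring
  have := two_mul_norm_le_opNorm_of_apply_eq_smul_add (S ^ n + Sinv ^ n)
    (orthonormal_stdBasis.comp _ fun a b h => by simpa [hn₀] using h)
    (orthonormal_stdBasis.comp _ fun a b h => by simpa [hn₀] using h) _ hT
  simpa [abs_of_pos hR₀] using this

/-- Let `S` be the bounded invertible bilateral weighted shift on `ℓ²(ℤ, ℂ)` with
`S e_k = (β(k+1)/β(k)) e_{k+1}`. Then `‖Sⁿ + S⁻ⁿ‖ ≥ 2 Rⁿ`. -/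
theorem weighted_shift_norm_lower_bound (R : ℝ) (hR : 1 < R) (n : ℕ) (hn : 2 ≤ n)
    (S Sinv : ellTwo →L[ℂ] ellTwo)
    (hinv₁ : S ∘L Sinv = 1) (hinv₂ : Sinv ∘L S = 1)
    (hS : ∀ k : ℤ, S (stdBasis k) =
      ((weightβ R n (k + 1) / weightβ R n k : ℝ) : ℂ) • stdBasis (k + 1)) :
    2 * R ^ n ≤ ‖S ^ n + Sinv ^ n‖ :=
  weighted_shift_norm_lower_bound_general R hR n hn S Sinv hinv₂ hS
end

section
/- For every real number R > 1 and every real number K < 2, there exist a complex Hilbert space H, a bounded invertible linear operator T on H with ‖T‖ ≤ R and ‖T^{-1}‖ ≤ R, and an integer n ≥ 1 such that ‖T^n + (T^{-1})^n‖ > K · (R^n + R^{-n}). Since R^n + R^{-n} = sup_{z ∈ A_R} |z^n + z^{-n}|, the annulus A_R is not a K-spectral set for such T when K < 2. -/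
/-- The closed annulus `A_R = {z : 1/R ≤ |z| ≤ R}`. -/
def annulus (R : ℝ) : Set ℂ := {z : ℂ | 1 / R ≤ ‖z‖ ∧ ‖z‖ ≤ R}

/-!
On `ℓ²(ℤ/2n)` let `T` be the weighted cyclic shift `e_k ↦ w_k e_{k+1}` with `w_k = R` for
`0 ≤ k < n` and `w_k = R⁻¹` for `n ≤ k < 2n`. All weights and their inverses have modulus at
most `R`, so `‖T‖, ‖T⁻¹‖ ≤ R`. Going forward from `e_0` through the first half of the weights,
`Tⁿ e_0 = Rⁿ e_n`; going backward through the second half, `T⁻ⁿ e_0 = Rⁿ e_{-n}`, and `-n = n`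
in `ℤ/2n`. Hence `‖Tⁿ + T⁻ⁿ‖ ≥ 2Rⁿ`, while the maximum of
`|zⁿ + z⁻ⁿ|` on `A_R` is `Rⁿ + R⁻ⁿ`, whose ratio to `Rⁿ` tends to `1`.
-/

open Finset Filter Topology
open EuclideanSpace (single)

section WeightedShift

variable {ι : Type*} [Fintype ι] [AddCommGroup ι]

noncomputable def weightedShift (c : ι) (a : ι → ℂ) :
    EuclideanSpace ℂ ι →L[ℂ] EuclideanSpace ℂ ι :=
  LinearMap.toContinuousLinearMap
    { toFun := fun x => WithLp.toLp 2 fun j => a (j - c) * x (j - c)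
      map_add' := fun x y => by ext j; simp [mul_add]
      map_smul' := fun r x => by ext j; simp [mul_left_comm] }

variable (c : ι) (a : ι → ℂ)

@[simp]
lemma weightedShift_apply (x : EuclideanSpace ℂ ι) (j : ι) :
    weightedShift c a x j = a (j - c) * x (j - c) := rfl

lemma weightedShift_comp (d : ι) (b : ι → ℂ) :
    weightedShift c a ∘L weightedShift d b = weightedShift (c + d) fun i => a (i + d) * b i := by
  ext x j
  simp [sub_add_eq_sub_sub, mul_assoc]

lemma weightedShift_zero_one : weightedShift (0 : ι) (fun _ => 1) = 1 := by
  ext x j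
  simp

lemma weightedShift_comp_inv (ha : ∀ i, a i ≠ 0) :
    weightedShift c a ∘L weightedShift (-c) (fun i => (a (i - c))⁻¹) = 1 := by
  rw [weightedShift_comp, add_neg_cancel, ← weightedShift_zero_one]
  congr! with i
  rw [← sub_eq_add_neg, mul_inv_cancel₀ (ha _)]

lemma weightedShift_inv_comp (ha : ∀ i, a i ≠ 0) :
    weightedShift (-c) (fun i => (a (i - c))⁻¹) ∘L weightedShift c a = 1 := by
  rw [weightedShift_comp, neg_add_cancel, ← weightedShift_zero_one]
  congr! with i
  rw [add_sub_cancel_right, inv_mul_cancel₀ (ha _)]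

lemma norm_weightedShift_le {C : ℝ} (hC : 0 ≤ C) (ha : ∀ i, ‖a i‖ ≤ C) :
    ‖weightedShift c a‖ ≤ C := by
  refine ContinuousLinearMap.opNorm_le_bound _ hC fun x => ?_
  rw [EuclideanSpace.norm_eq, EuclideanSpace.norm_eq, ← Real.sqrt_sq hC,
    ← Real.sqrt_mul (sq_nonneg C)]
  gcongr
  calc ∑ j, ‖weightedShift c a x j‖ ^ 2
      ≤ ∑ j, C ^ 2 * ‖x (j - c)‖ ^ 2 := by
        gcongr with j
        rw [weightedShift_apply, norm_mul, mul_pow]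
        gcongr
        exact ha _
    _ = C ^ 2 * ∑ i, ‖x i‖ ^ 2 := by
        rw [← mul_sum]; exact congrArg _ ((Equiv.subRight c).sum_comp fun i => ‖x i‖ ^ 2)

variable [DecidableEq ι]

lemma weightedShift_single (k : ι) (v : ℂ) :
    weightedShift c a (single k v) = single (k + c) (a k * v) := by
  ext j
  by_cases h : j = k + c <;> simp [h, sub_eq_iff_eq_add]

lemma weightedShift_pow_single (m : ℕ) (k : ι) (v : ℂ) :
    (weightedShift c a ^ m) (single k v) =
      single (k + m • c) ((∏ i ∈ range m, a (k + i • c)) * v) := by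
  induction m with
  | zero => simp
  | succ m ih =>
    rw [pow_succ', mul_apply_eq_comp, ih, weightedShift_single, prod_range_succ,
      succ_nsmul, add_assoc]
    ring_nf

end WeightedShift

section AnnulusShift

variable (R : ℝ) (n : ℕ)

noncomputable def splitWeight : ZMod (2 * n) → ℂ :=
  fun k => if k.val < n then (R : ℂ) else (R : ℂ)⁻¹

variable {R n}

lemma splitWeight_ne_zero (hR : R ≠ 0) (k : ZMod (2 * n)) : splitWeight R n k ≠ 0 := by
  unfold splitWeight; split_ifs <;> simp [hR]

lemma norm_splitWeight_le (hR : 1 ≤ R) (k : ZMod (2 * n)) : ‖splitWeight R n k‖ ≤ R := by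
  have : R⁻¹ ≤ R := (inv_le_one_of_one_le₀ hR).trans hR
  unfold splitWeight; split_ifs <;> simp [abs_of_pos (zero_lt_one.trans_le hR), this]

lemma norm_inv_splitWeight_le (hR : 1 ≤ R) (k : ZMod (2 * n)) : ‖(splitWeight R n k)⁻¹‖ ≤ R := by
  have : R⁻¹ ≤ R := (inv_le_one_of_one_le₀ hR).trans hR
  unfold splitWeight; split_ifs <;> simp [abs_of_pos (zero_lt_one.trans_le hR), this]

lemma splitWeight_natCast_of_lt {i : ℕ} (hi : i < n) : splitWeight R n i = R := by
  rw [splitWeight, if_pos (by rwa [ZMod.val_natCast_of_lt (by omega)])]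

lemma splitWeight_natCast_add_of_lt {i : ℕ} (hi : i < n) : splitWeight R n (n + i) = (R : ℂ)⁻¹ := by
  rw [splitWeight, ← Nat.cast_add, if_neg (by rw [ZMod.val_natCast_of_lt (by omega)]; omega)]

variable (R n) [NeZero n]

noncomputable def annulusShift :
    EuclideanSpace ℂ (ZMod (2 * n)) →L[ℂ] EuclideanSpace ℂ (ZMod (2 * n)) :=
  weightedShift 1 (splitWeight R n)

noncomputable def annulusShiftInv :
    EuclideanSpace ℂ (ZMod (2 * n)) →L[ℂ] EuclideanSpace ℂ (ZMod (2 * n)) :=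
  weightedShift (-1) fun i => (splitWeight R n (i - 1))⁻¹

variable {R n}

lemma annulusShift_comp_annulusShiftInv (hR : R ≠ 0) :
    annulusShift R n ∘L annulusShiftInv R n = 1 :=
  weightedShift_comp_inv _ _ (splitWeight_ne_zero hR)

lemma annulusShiftInv_comp_annulusShift (hR : R ≠ 0) :
    annulusShiftInv R n ∘L annulusShift R n = 1 :=
  weightedShift_inv_comp _ _ (splitWeight_ne_zero hR)

lemma norm_annulusShift_le (hR : 1 ≤ R) : ‖annulusShift R n‖ ≤ R :=
  norm_weightedShift_le _ _ (zero_le_one.trans hR) (norm_splitWeight_le hR)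

lemma norm_annulusShiftInv_le (hR : 1 ≤ R) : ‖annulusShiftInv R n‖ ≤ R :=
  norm_weightedShift_le _ _ (zero_le_one.trans hR) fun _ => norm_inv_splitWeight_le hR _

lemma annulusShift_pow_single_zero (v : ℂ) :
    (annulusShift R n ^ n) (single 0 v) =
      single (n : ZMod (2 * n)) (R ^ n * v) := by
  rw [annulusShift, weightedShift_pow_single, prod_eq_pow_card (b := (R : ℂ)), card_range]
  · simp
  · intro i hi
    simpa using splitWeight_natCast_of_lt (mem_range.mp hi)

lemma annulusShift_pow_single_self (v : ℂ) :
    (annulusShift R n ^ n) (single (n : ZMod (2 * n)) v) =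
      single 0 ((R : ℂ)⁻¹ ^ n * v) := by
  rw [annulusShift, weightedShift_pow_single, prod_eq_pow_card (b := (R : ℂ)⁻¹), card_range]
  · rw [nsmul_one, ← Nat.cast_add, ← two_mul, ZMod.natCast_self]
  · intro i hi
    simpa using splitWeight_natCast_add_of_lt (mem_range.mp hi)

lemma annulusShiftInv_pow_single_zero (hR : R ≠ 0) (v : ℂ) :
    (annulusShiftInv R n ^ n) (single 0 v) =
      single (n : ZMod (2 * n)) (R ^ n * v) := by
  have hR' : (R : ℂ) ^ n ≠ 0 := pow_ne_zero _ (Complex.ofReal_ne_zero.mpr hR)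
  have : single 0 v =
      (annulusShift R n ^ n) (single (n : ZMod (2 * n)) (R ^ n * v)) := by
    rw [annulusShift_pow_single_self, ← mul_assoc, inv_pow, inv_mul_cancel₀ hR', one_mul]
  rw [this, ← mul_apply_eq_comp, pow_mul_pow_eq_one n (annulusShiftInv_comp_annulusShift hR),
    one_apply_eq_self]

lemma two_mul_pow_le_norm_annulusShift_pow_add (hR : 0 < R) :
    2 * R ^ n ≤ ‖annulusShift R n ^ n + annulusShiftInv R n ^ n‖ := by
  have h := (annulusShift R n ^ n + annulusShiftInv R n ^ n).le_opNorm (single 0 1)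
  rw [add_apply, annulusShift_pow_single_zero, annulusShiftInv_pow_single_zero hR.ne',
    ← PiLp.single_add, ← two_mul] at h
  simpa [abs_of_pos hR] using h

end AnnulusShift

lemma add_inv_le_add_inv {a b : ℝ} (ha : 0 < a) (hba : b⁻¹ ≤ a) (hab : a ≤ b) :
    a + a⁻¹ ≤ b + b⁻¹ := by
  have hb : 0 < b := ha.trans_le hab
  have hab1 : 1 ≤ a * b := (inv_le_iff_one_le_mul₀ hb).mp hba
  have key : b + b⁻¹ - (a + a⁻¹) = (b - a) * (a * b - 1) / (a * b) := by
    field_simp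
    ring
  have : 0 ≤ b + b⁻¹ - (a + a⁻¹) := by
    rw [key]
    exact div_nonneg (mul_nonneg (by linarith) (by linarith)) (by positivity)
  linarith

lemma isGreatest_norm_pow_add_inv_pow_annulus {R : ℝ} (hR : 1 ≤ R) (n : ℕ) :
    IsGreatest ((fun z : ℂ => ‖z ^ n + z⁻¹ ^ n‖) '' annulus R) (R ^ n + R⁻¹ ^ n) := by
  have hR0 : 0 < R := zero_lt_one.trans_le hR
  refine ⟨⟨R, ⟨?_, ?_⟩, ?_⟩, ?_⟩
  · simpa [abs_of_pos hR0] using (inv_le_one_of_one_le₀ hR).trans hR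
  · simp [abs_of_pos hR0]
  · show ‖(R : ℂ) ^ n + (R : ℂ)⁻¹ ^ n‖ = _
    rw [← Complex.ofReal_inv, ← Complex.ofReal_pow, ← Complex.ofReal_pow, ← Complex.ofReal_add,
      Complex.norm_real, Real.norm_of_nonneg (by positivity)]
  · rintro _ ⟨z, ⟨hz₁, hz₂⟩, rfl⟩
    have hz : 0 < ‖z‖ := lt_of_lt_of_le (by positivity) hz₁
    calc ‖z ^ n + z⁻¹ ^ n‖ ≤ ‖z‖ ^ n + (‖z‖ ^ n)⁻¹ := by
          simpa [norm_pow, norm_inv] using norm_add_le (z ^ n) (z⁻¹ ^ n)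
      _ ≤ R ^ n + (R ^ n)⁻¹ := by
          refine add_inv_le_add_inv (by positivity) ?_ (by gcongr)
          rw [← inv_pow, ← one_div]
          gcongr
      _ = R ^ n + R⁻¹ ^ n := by rw [inv_pow]

lemma eventually_mul_pow_add_inv_pow_lt_two_mul_pow {R K : ℝ} (hR : 1 < R) (hK : K < 2) :
    ∀ᶠ n : ℕ in atTop, K * (R ^ n + R⁻¹ ^ n) < 2 * R ^ n := by
  have hR0 : 0 < R := zero_lt_one.trans hR
  have hlim : Tendsto (fun n : ℕ => K * (1 + (R⁻¹ ^ 2) ^ n)) atTop (𝓝 K) := by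
    have h := tendsto_pow_atTop_nhds_zero_of_lt_one (by positivity : 0 ≤ R⁻¹ ^ 2)
      (pow_lt_one₀ (by positivity) (inv_lt_one_of_one_lt₀ hR) two_ne_zero)
    simpa using (h.const_add 1).const_mul K
  filter_upwards [hlim.eventually (gt_mem_nhds hK)] with n hn
  calc K * (R ^ n + R⁻¹ ^ n) = R ^ n * (K * (1 + (R⁻¹ ^ 2) ^ n)) := by
        have h : R ^ n * R⁻¹ ^ n = 1 := by rw [← mul_pow, mul_inv_cancel₀ hR0.ne', one_pow]
        linear_combination (-(K * R⁻¹ ^ n)) * h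
    _ < R ^ n * 2 := by gcongr
    _ = 2 * R ^ n := mul_comm _ _

/-- For every `R > 1` and every `K < 2` there exist a complex Hilbert space `H`,
a bounded invertible operator `T` on `H` with `‖T‖ ≤ R` and `‖T⁻¹‖ ≤ R`, and an
integer `n ≥ 1` with `‖Tⁿ + (T⁻¹)ⁿ‖ > K (Rⁿ + R⁻ⁿ)`.  Since
`Rⁿ + R⁻ⁿ = sup_{z ∈ A_R} |zⁿ + z⁻ⁿ|`, the annulus `A_R` is not a `K`-spectral
set for such `T` when `K < 2`. -/
theorem annulus_not_K_spectral_of_lt_two (R : ℝ) (hR : 1 < R) (K : ℝ) (hK : K < 2) :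
    ∃ (H : Type) (_ : NormedAddCommGroup H) (_ : InnerProductSpace ℂ H) (_ : CompleteSpace H)
      (T Tinv : H →L[ℂ] H) (n : ℕ),
      T ∘L Tinv = 1 ∧ Tinv ∘L T = 1 ∧ ‖T‖ ≤ R ∧ ‖Tinv‖ ≤ R ∧ 1 ≤ n ∧
      (IsGreatest ((fun z : ℂ => ‖z ^ n + z⁻¹ ^ n‖) '' annulus R)
        (R ^ n + R⁻¹ ^ n)) ∧
      K * (R ^ n + R⁻¹ ^ n) < ‖T ^ n + Tinv ^ n‖ := by
  obtain ⟨n, hKn, hn⟩ :=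
    ((eventually_mul_pow_add_inv_pow_lt_two_mul_pow hR hK).and (eventually_ge_atTop 1)).exists
  have : NeZero n := ⟨by omega⟩
  have hR0 : 0 < R := zero_lt_one.trans hR
  exact ⟨_, inferInstance, inferInstance, inferInstance, annulusShift R n, annulusShiftInv R n, n,
    annulusShift_comp_annulusShiftInv hR0.ne', annulusShiftInv_comp_annulusShift hR0.ne',
    norm_annulusShift_le hR.le, norm_annulusShiftInv_le hR.le, hn,
    isGreatest_norm_pow_add_inv_pow_annulus hR.le n,
    hKn.trans_le (two_mul_pow_le_norm_annulusShift_pow_add hR0)⟩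
end
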